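/- Let ℙ be a forcing notion and λ a cardinal. If ℙ is not λ-distributive, then Player I has a winning strategy in the λ-distributivity game G_λ(ℙ). -/

import Mathlib

universe u

section ForcingDefs

variable {P : Type u} [Preorder P]

/-- Two conditions of a forcing notion are compatible if they have a common lower bound. -/
def Compat (p q : P) : Prop := ∃ r : P, r ≤ p ∧ r ≤ q

/-- A maximal antichain: a set of pairwise incompatible conditions such that every
condition is compatible with some element of the set. -/
def MaxAntichain (A : Set P) : Prop :=
  (∀ p ∈ A, ∀ q ∈ A, p ≠ q → ¬ Compat p q) ∧ ∀ p : P, ∃ a ∈ A, Compat p a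

/-- `B` refines `A` if every element of `B` lies below some element of `A`. -/
def Refines (B A : Set P) : Prop := ∀ b ∈ B, ∃ a ∈ A, b ≤ a

/-- `P` is `κ`-distributive: every family of `κ` many maximal antichains has a
common refinement. -/
def Distributive (P : Type u) [Preorder P] (κ : Cardinal.{u}) : Prop :=
  ∀ (ι : Type u) (A : ι → Set P), Cardinal.mk ι = κ →
    (∀ i, MaxAntichain (A i)) →
    ∃ B : Set P, MaxAntichain B ∧ ∀ i, Refines B (A i)

/-- The distributivity number `𝔥(P)`: the least cardinal `κ` such that `P` is not
`κ`-distributive. -/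
noncomputable def hdist (P : Type u) [Preorder P] : Cardinal.{u} :=
  sInf {κ : Cardinal.{u} | ¬ Distributive P κ}

/-- A distributivity matrix for `P` of height `lam` (an ordinal, typically `λ.ord`
for a cardinal `λ`): a refining sequence of maximal antichains without common
refinement. -/
def IsDistribMatrix (P : Type u) [Preorder P] (lam : Ordinal.{u})
    (A : Ordinal.{u} → Set P) : Prop :=
  (∀ ξ, ξ < lam → MaxAntichain (A ξ)) ∧
  (∀ ξ η : Ordinal.{u}, ξ ≤ η → η < lam → Refines (A η) (A ξ)) ∧
  ¬ ∃ B : Set P, MaxAntichain B ∧ ∀ ξ, ξ < lam → Refines B (A ξ)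

/-- A base matrix: a distributivity matrix whose union is dense. -/
def IsBaseMatrix (P : Type u) [Preorder P] (lam : Ordinal.{u})
    (A : Ordinal.{u} → Set P) : Prop :=
  IsDistribMatrix P lam A ∧ ∀ p : P, ∃ ξ, ξ < lam ∧ ∃ a ∈ A ξ, a ≤ p

/-- A branch of the matrix `A` of length `δ`: a decreasing sequence meeting each
level below `δ`. -/
def IsBranch {P : Type u} [Preorder P] (A : Ordinal.{u} → Set P) (δ : Ordinal.{u})
    (f : Ordinal.{u} → P) : Prop :=
  (∀ ξ, ξ < δ → f ξ ∈ A ξ) ∧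
  ∀ ξ η : Ordinal.{u}, ξ ≤ η → η < δ → f η ≤ f ξ

/-- A maximal branch of a matrix of height `lam`: a branch which no branch of the
matrix strictly extends. -/
def IsMaximalBranch {P : Type u} [Preorder P] (A : Ordinal.{u} → Set P)
    (lam δ : Ordinal.{u}) (f : Ordinal.{u} → P) : Prop :=
  δ ≤ lam ∧ IsBranch A δ f ∧
  ¬ ∃ (δ' : Ordinal.{u}) (g : Ordinal.{u} → P),
      δ < δ' ∧ δ' ≤ lam ∧ IsBranch A δ' g ∧ ∀ ξ, ξ < δ → g ξ = f ξ

end ForcingDefs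

section Game

variable {P : Type u} [Preorder P]

/-- A strategy in the distributivity game: given the stage `i` and the history of
moves at stages `j < i`, produce the next move. -/
abbrev GameStrategy (P : Type u) : Type (u + 1) :=
  (i : Ordinal.{u}) → ((j : Ordinal.{u}) → j < i → P) → P

/-- The history `h` (a position of the game) is decreasing. -/
def DecrHist {P : Type u} [Preorder P] {i : Ordinal.{u}}
    (h : (j : Ordinal.{u}) → j < i → P) : Prop :=
  ∀ j k (hj : j < i) (hk : k < i), j ≤ k → h k hk ≤ h j hj

/-- In the game of length `lam`, Player I moves at stage `0` and at successor stages
(i.e. at non-limit stages); a strategy for Player I must produce a legal move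
(a lower bound of the position) at every decreasing position where it is
Player I's turn. -/
def LegalStratI (lam : Ordinal.{u}) (σ : GameStrategy P) : Prop :=
  ∀ i, i < lam → ¬ Order.IsSuccLimit i →
    ∀ h : (j : Ordinal.{u}) → j < i → P, DecrHist h →
      ∀ j (hj : j < i), σ i h ≤ h j hj

/-- Player II moves at limit stages; a strategy for Player II must produce a legal
move at every decreasing limit position that admits a lower bound at all (if no
lower bound exists, the game ends and Player I wins immediately). -/
def LegalStratII (lam : Ordinal.{u}) (τ : GameStrategy P) : Prop :=
  ∀ i, i < lam → Order.IsSuccLimit i →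
    ∀ h : (j : Ordinal.{u}) → j < i → P, DecrHist h →
      (∃ b : P, ∀ j (hj : j < i), b ≤ h j hj) →
      ∀ j (hj : j < i), τ i h ≤ h j hj

/-- The sequence `r` follows the strategy `σ` of Player I at all non-limit stages
below `lam`. -/
def PlaysI (lam : Ordinal.{u}) (σ : GameStrategy P) (r : Ordinal.{u} → P) : Prop :=
  ∀ i, i < lam → ¬ Order.IsSuccLimit i → r i = σ i (fun j _ => r j)

/-- The sequence `r` follows the strategy `τ` of Player II at all limit stages
below `lam`. -/
def PlaysII (lam : Ordinal.{u}) (τ : GameStrategy P) (r : Ordinal.{u} → P) : Prop :=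
  ∀ i, i < lam → Order.IsSuccLimit i → r i = τ i (fun j _ => r j)

/-- `σ` is a winning strategy for Player I in the distributivity game of length
`lam`: it is a (legal) strategy, and every completed run of the game in which
Player I follows `σ` is won by Player I, i.e. there is no `b` lying below every
move of Player I.  (Runs which end prematurely because Player II cannot move at
some limit stage are automatically won by Player I; completed runs are exactly the
decreasing sequences of length `lam` in which Player II moved legally at every
limit stage.) -/
def WinningStratI (lam : Ordinal.{u}) (σ : GameStrategy P) : Prop :=
  LegalStratI lam σ ∧
  ∀ r : Ordinal.{u} → P, PlaysI lam σ r →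
    (∀ j k : Ordinal.{u}, j ≤ k → k < lam → r k ≤ r j) →
    ¬ ∃ b : P, ∀ i, i < lam → ¬ Order.IsSuccLimit i → b ≤ r i

/-- `τ` is a winning strategy for Player II in the distributivity game of length
`lam`: it is a (legal) strategy, and for every run in which Player II follows `τ`
and Player I moves legally (as long as the position is decreasing, i.e. as long as
nobody has already broken the rules), the run is decreasing throughout (in
particular Player II could always move at limit stages) and there is some `b`
lying below every move of Player I. -/
def WinningStratII (lam : Ordinal.{u}) (τ : GameStrategy P) : Prop :=
  LegalStratII lam τ ∧
  ∀ r : Ordinal.{u} → P, PlaysII lam τ r →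
    (∀ i, i < lam → ¬ Order.IsSuccLimit i →
      (∀ j k (hj : j < i) (hk : k < i), j ≤ k → r k ≤ r j) →
      ∀ j, j < i → r i ≤ r j) →
    (∀ j k : Ordinal.{u}, j ≤ k → k < lam → r k ≤ r j) ∧
    ∃ b : P, ∀ i, i < lam → ¬ Order.IsSuccLimit i → b ≤ r i

end Game
/-!
Non-distributivity yields `λ` maximal antichains and a condition `p` such that no condition
below `p` lies below an element of each of them. Enumerate the antichains along `λ.ord`.
Player I opens below `p`, and at every non-limit stage `i` moves below an element of the
`i`-th antichain; at a successor stage `k + 1` he first does the same for the `k`-th one,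
which takes care of the antichains at limit levels (`λ.ord` is a limit ordinal once `λ` is
infinite). A lower bound of all his moves would then
lie below `p` and below an element of every antichain.
-/

section Forcing

variable {P : Type u} [Preorder P]

theorem Compat.symm {p q : P} (h : Compat p q) : Compat q p :=
  let ⟨r, hrp, hrq⟩ := h; ⟨r, hrq, hrp⟩

theorem exists_maxAntichain_subset_of_dense {D : Set P} (hD : ∀ q, ∃ d ∈ D, d ≤ q) :
    ∃ B ⊆ D, MaxAntichain B := by
  let S : Set (Set P) := {B | B ⊆ D ∧ B.Pairwise fun p q => ¬ Compat p q}
  obtain ⟨B, ⟨hBD, hBac⟩, hBmax⟩ := zorn_subset S fun c hcS hc =>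
    ⟨⋃₀ c, ⟨Set.sUnion_subset fun s hs => (hcS hs).1,
      (Set.pairwise_sUnion hc.directedOn).2 fun s hs => (hcS hs).2⟩,
      fun _ => Set.subset_sUnion_of_mem⟩
  refine ⟨B, hBD, hBac, fun q => ?_⟩
  obtain ⟨d, hdD, hdq⟩ := hD q
  suffices ∃ a ∈ B, Compat d a by
    obtain ⟨a, haB, r, hrd, hra⟩ := this
    exact ⟨a, haB, r, hrd.trans hdq, hra⟩
  by_contra! hinc
  have hins : insert d B ∈ S :=
    ⟨Set.insert_subset hdD hBD,
      hBac.insert fun a haB _ => ⟨hinc a haB, fun h => hinc a haB h.symm⟩⟩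
  exact hinc d (hBmax hins (Set.subset_insert d B) (Set.mem_insert d B)) ⟨d, le_rfl, le_rfl⟩

/-- Since the conditions lying below an element of each `A i` cannot be dense (a maximal
antichain inside them would be a common refinement), some `p` has none of them below it. -/
theorem exists_maxAntichains_of_not_distributive {κ : Cardinal.{u}}
    (h : ¬ Distributive P κ) :
    ∃ (ι : Type u) (A : ι → Set P), Cardinal.mk ι = κ ∧ (∀ i, MaxAntichain (A i)) ∧
      ∃ p : P, ∀ b ≤ p, ¬ ∀ i, ∃ a ∈ A i, b ≤ a := by
  simp only [Distributive, not_forall, not_exists, not_and] at h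
  obtain ⟨ι, A, hκ, hA, hno⟩ := h
  refine ⟨ι, A, hκ, hA, ?_⟩
  by_contra! hdense
  obtain ⟨B, hBD, hB⟩ := exists_maxAntichain_subset_of_dense (D := {b | ∀ i, ∃ a ∈ A i, b ≤ a})
    fun q => let ⟨b, hbq, hb⟩ := hdense q; ⟨b, hb, hbq⟩
  obtain ⟨i, hi⟩ := hno B hB
  exact hi fun b hb => hBD hb i

end Forcing

theorem Cardinal.exists_reindex_ord {ι : Type u} {α : Type*} [Inhabited α] (f : ι → α) :
    ∃ g : Ordinal.{u} → α, (∀ ξ < (Cardinal.mk ι).ord, ∃ i, g ξ = f i) ∧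
      ∀ i, ∃ ξ < (Cardinal.mk ι).ord, g ξ = f i := by
  classical
  obtain ⟨E⟩ : Nonempty ((Cardinal.mk ι).ord.ToType ≃ ι) := by
    rw [← Cardinal.eq, Cardinal.mk_toType, Cardinal.card_ord]
  refine ⟨fun ξ => if hξ : ξ < (Cardinal.mk ι).ord then f (E (Ordinal.ToType.mk ⟨ξ, hξ⟩))
    else default, fun ξ hξ => ⟨_, dif_pos hξ⟩, fun i => ?_⟩
  set x := Ordinal.ToType.mk.symm (E.symm i) with hx
  refine ⟨x, Set.mem_Iio.mp x.2, ?_⟩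
  dsimp only
  rw [dif_pos (Set.mem_Iio.mp x.2)]
  simp [hx]

theorem Cardinal.succ_lt_ord_of_isSuccLimit {κ : Cardinal.{u}} {ξ : Ordinal.{u}}
    (hξ : ξ < κ.ord) (hl : Order.IsSuccLimit ξ) : Order.succ ξ < κ.ord := by
  have hω : Cardinal.aleph0 ≤ κ := by
    rw [← Cardinal.ord_le_ord, Cardinal.ord_aleph0]
    exact (Ordinal.omega0_le_of_isSuccLimit hl).trans hξ.le
  exact (Cardinal.isSuccLimit_ord hω).succ_lt hξ

section Strategy

variable {P : Type u}

/-- The strategy of Player I driven by `g`, where `g q ξ` is meant to be a condition below `q`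
and below an element of the `ξ`-th antichain. -/
noncomputable def descentStrategy (g : P → Ordinal.{u} → P) (p : P) : GameStrategy P :=
  fun i h => g (if hi : Ordinal.pred i < i then g (h _ hi) (Ordinal.pred i) else p) i

theorem exists_descentStrategy_eq (g : P → Ordinal.{u} → P) (p : P) (i : Ordinal.{u})
    (h : (j : Ordinal.{u}) → j < i → P) : ∃ q, descentStrategy g p i h = g q i :=
  ⟨_, rfl⟩

theorem descentStrategy_zero (g : P → Ordinal.{u} → P) (p : P)
    (h : (j : Ordinal.{u}) → j < 0 → P) : descentStrategy g p 0 h = g p 0 := by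
  simp [descentStrategy]

theorem descentStrategy_succ (g : P → Ordinal.{u} → P) (p : P) (k : Ordinal.{u})
    (h : (j : Ordinal.{u}) → j < Order.succ k → P) :
    descentStrategy g p (Order.succ k) h = g (g (h k (Order.lt_succ k)) k) (Order.succ k) := by
  simp [descentStrategy]

variable [Preorder P] {g : P → Ordinal.{u} → P}

theorem legalStratI_descentStrategy (hg : ∀ q ξ, g q ξ ≤ q) (o : Ordinal.{u}) (p : P) :
    LegalStratI o (descentStrategy g p) := by
  intro i _ hnl h hdecr j hj
  obtain rfl | ⟨k, rfl⟩ | hl := Ordinal.zero_or_succ_or_isSuccLimit i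
  · exact absurd hj not_lt_zero
  · rw [descentStrategy_succ]
    exact ((hg _ _).trans (hg _ _)).trans (hdecr j k hj _ (Order.lt_succ_iff.mp hj))
  · exact absurd hl hnl

theorem winningStratI_descentStrategy (hg : ∀ q ξ, g q ξ ≤ q) {o : Ordinal.{u}}
    {A : Ordinal.{u} → Set P} (hgA : ∀ q, ∀ ξ < o, ∃ a ∈ A ξ, g q ξ ≤ a)
    (ho : ∀ ξ < o, Order.IsSuccLimit ξ → Order.succ ξ < o) {p : P}
    (hp : ∀ b ≤ p, ¬ ∀ ξ < o, ∃ a ∈ A ξ, b ≤ a) :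
    WinningStratI o (descentStrategy g p) := by
  refine ⟨legalStratI_descentStrategy hg o p, fun r hplays _ ⟨b, hb⟩ => hp b ?_ ?_⟩
  · have ho0 : 0 < o := by
      by_contra! ho0
      exact hp p le_rfl fun ξ hξ => absurd (hξ.trans_le ho0) not_lt_zero
    have hb0 := hb 0 ho0 Ordinal.not_isSuccLimit_zero
    rw [hplays 0 ho0 Ordinal.not_isSuccLimit_zero, descentStrategy_zero] at hb0
    exact hb0.trans (hg p 0)
  intro ξ hξ
  by_cases hl : Order.IsSuccLimit ξ
  · have hs := ho ξ hξ hl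
    have hbs := hb _ hs (Order.not_isSuccLimit_succ ξ)
    rw [hplays _ hs (Order.not_isSuccLimit_succ ξ), descentStrategy_succ] at hbs
    obtain ⟨a, ha, hle⟩ := hgA (r ξ) ξ hξ
    exact ⟨a, ha, (hbs.trans (hg _ _)).trans hle⟩
  · obtain ⟨q, hq⟩ := exists_descentStrategy_eq g p ξ fun j _ => r j
    obtain ⟨a, ha, hle⟩ := hgA q ξ hξ
    rw [← hq, ← hplays ξ hξ hl] at hle
    exact ⟨a, ha, (hb ξ hξ hl).trans hle⟩

end Strategy

theorem exists_winningStratI_of_forall_le_not_below {P : Type u} [Preorder P] {o : Ordinal.{u}}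
    {A : Ordinal.{u} → Set P} (hA : ∀ ξ < o, ∀ q, ∃ a ∈ A ξ, Compat q a)
    (ho : ∀ ξ < o, Order.IsSuccLimit ξ → Order.succ ξ < o) {p : P}
    (hp : ∀ b ≤ p, ¬ ∀ ξ < o, ∃ a ∈ A ξ, b ≤ a) :
    ∃ σ : GameStrategy P, WinningStratI o σ := by
  have hdesc : ∀ (q : P) (ξ : Ordinal.{u}), ∃ r ≤ q, ξ < o → ∃ a ∈ A ξ, r ≤ a := by
    intro q ξ
    by_cases hξ : ξ < o
    · obtain ⟨a, ha, r, hrq, hra⟩ := hA ξ hξ q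
      exact ⟨r, hrq, fun _ => ⟨a, ha, hra⟩⟩
    · exact ⟨q, le_rfl, fun h => absurd h hξ⟩
  choose g hg hgA using hdesc
  exact ⟨descentStrategy g p, winningStratI_descentStrategy hg hgA ho hp⟩

theorem not_distributive_winning_strategy_general {P : Type u} [PartialOrder P]
    (lam : Cardinal.{u}) (h : ¬ Distributive P lam) :
    ∃ σ : GameStrategy P, WinningStratI lam.ord σ := by
  obtain ⟨ι, A, rfl, hA, p, hp⟩ := exists_maxAntichains_of_not_distributive h
  obtain ⟨A', hlevel, hcover⟩ := Cardinal.exists_reindex_ord A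
  refine exists_winningStratI_of_forall_le_not_below (A := A') (p := p) ?_
    (fun ξ hξ hl => Cardinal.succ_lt_ord_of_isSuccLimit hξ hl) ?_
  · intro ξ hξ
    obtain ⟨i, hi⟩ := hlevel ξ hξ
    exact hi ▸ (hA i).2
  · intro b hbp hall
    refine hp b hbp fun i => ?_
    obtain ⟨ξ, hξ, hi⟩ := hcover i
    exact hi ▸ hall ξ hξ

/-- If `P` is not `λ`-distributive then Player I has a winning
strategy in the `λ`-distributivity game on `P`. -/
theorem not_distributive_winning_strategy {P : Type u} [PartialOrder P] [Nonempty P]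
    (lam : Cardinal.{u}) (h : ¬ Distributive P lam) :
    ∃ σ : GameStrategy P, WinningStratI lam.ord σ :=
  not_distributive_winning_strategy_general lam h
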